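/- For any bipartition (ρ;σ) of n, one has (ρ;σ) ≤ Φ̂^B(Φ^B(ρ;σ)) in the interleaved dominance order, with equality if and only if (ρ;σ) ∈ Q_n^B. -/

import Mathlib

open Finset

/-- Partial sum of the first `k` terms of a sequence of naturals. -/
def psum (π : ℕ → ℕ) (k : ℕ) : ℕ := ∑ i ∈ Finset.range k, π i

/-- A composition of `n`: almost all terms zero, summing to `n`. -/
def IsComposition (n : ℕ) (π : ℕ → ℕ) : Prop :=
  ∃ N, (∀ i, N ≤ i → π i = 0) ∧ psum π N = n

/-- Dominance order: `l` dominates `π`. -/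
def Dominates (l π : ℕ → ℕ) : Prop := ∀ k, psum π k ≤ psum l k

/-- A partition: weakly decreasing sequence. -/
def IsPartition (π : ℕ → ℕ) : Prop := ∀ i, π (i + 1) ≤ π i

/-- A quasi-partition: `π i ≥ π (i+2)` for all `i`. -/
def IsQuasiPartition (π : ℕ → ℕ) : Prop := ∀ i, π (i + 2) ≤ π i

/-- Interleaving of two sequences: `(ρ₁, σ₁, ρ₂, σ₂, …)` (0-indexed). -/
def interleave (ρ σ : ℕ → ℕ) (i : ℕ) : ℕ :=
  if i % 2 = 0 then ρ (i / 2) else σ (i / 2)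

/-- A bipartition of `n`: a pair of partitions whose interleaving sums to `n`. -/
def IsBipartition (n : ℕ) (ρ σ : ℕ → ℕ) : Prop :=
  IsPartition ρ ∧ IsPartition σ ∧ IsComposition n (interleave ρ σ)

/-- Interleaved dominance order on bipartitions: `(ρ;σ) ≤ (μ;ν)`. -/
def BiLE (ρ σ μ ν : ℕ → ℕ) : Prop :=
  Dominates (interleave μ ν) (interleave ρ σ)

/-- The map `Φ^C` on sequences: replace a consecutive pair `2s < 2t`
by `s+t, s+t` (pointwise description; replacements never overlap for
quasi-partitions). -/
def phiC (π : ℕ → ℕ) : ℕ → ℕ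
  | 0 => if π 0 < π 1 then (π 0 + π 1) / 2 else π 0
  | (j + 1) =>
      if π (j + 1) < π (j + 2) then (π (j + 1) + π (j + 2)) / 2
      else if π j < π (j + 1) then (π j + π (j + 1)) / 2
      else π (j + 1)

/-- `Φ^C` of a bipartition: apply `phiC` to the doubled interleaving. -/
def PhiC (ρ σ : ℕ → ℕ) : ℕ → ℕ := phiC (fun i => 2 * interleave ρ σ i)

/-- Membership in `P^C_{2n}`: partition of `2n` with every odd part of even
multiplicity. -/
def IsPC (n : ℕ) (l : ℕ → ℕ) : Prop :=
  IsPartition l ∧ IsComposition (2 * n) l ∧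
    ∀ a : ℕ, Odd a → Even ({i | l i = a}.ncard)

/-- C-distinguished: `μ i ≥ ν i - 1` and `ν i ≥ μ (i+1) - 1`. -/
def QC (μ ν : ℕ → ℕ) : Prop :=
  ∀ i, ν i ≤ μ i + 1 ∧ μ (i + 1) ≤ ν i + 1

/-- B-distinguished: `μ i ≥ ν i - 2` and `ν i ≥ μ (i+1)`. -/
def QB (μ ν : ℕ → ℕ) : Prop :=
  ∀ i, ν i ≤ μ i + 2 ∧ μ (i + 1) ≤ ν i

/-- Special: `μ i ≥ ν i - 1` and `ν i ≥ μ (i+1)`. -/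
def QS (μ ν : ℕ → ℕ) : Prop :=
  ∀ i, ν i ≤ μ i + 1 ∧ μ (i + 1) ≤ ν i

/-- The condition defining `Q_n^{B,2}`: `μ i ≥ ν i - 2`. -/
def QB2 (μ ν : ℕ → ℕ) : Prop := ∀ i, ν i ≤ μ i + 2

/-- For an antitone sequence, the starting index of the run of equal values
containing index `i`. -/
noncomputable def runStart (l : ℕ → ℕ) (i : ℕ) : ℕ := {j | l i < l j}.ncard

/-- The map `Φ̂^C`, pointwise: halve even parts; replace an (even-length)
maximal run of an odd part `2k+1` with `k, k+1, k, k+1, …`. -/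
noncomputable def hphiC (l : ℕ → ℕ) (i : ℕ) : ℕ :=
  if Even (l i) then l i / 2
  else if Even (i - runStart l i) then l i / 2 else l i / 2 + 1

/-- Partial sums of an integer sequence. -/
def zsum (π : ℕ → ℤ) (k : ℕ) : ℤ := ∑ i ∈ Finset.range k, π i

/-- Dominance order on integer sequences. -/
def ZDominates (l π : ℕ → ℤ) : Prop := ∀ k, zsum π k ≤ zsum l k

/-- The interleaved integer sequence `(2ρ₁+1, 2σ₁−1, 2ρ₂+1, 2σ₂−1, …)`. -/
def interB (ρ σ : ℕ → ℕ) (i : ℕ) : ℤ :=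
  if i % 2 = 0 then 2 * (ρ (i / 2) : ℤ) + 1 else 2 * (σ (i / 2) : ℤ) - 1

/-- The map `Φ^B` on integer sequences: replace a consecutive pair `s < t`
by `(s+t)/2, (s+t)/2` (pointwise description). -/
def phiB (π : ℕ → ℤ) : ℕ → ℤ
  | 0 => if π 0 < π 1 then (π 0 + π 1) / 2 else π 0
  | (j + 1) =>
      if π (j + 1) < π (j + 2) then (π (j + 1) + π (j + 2)) / 2
      else if π j < π (j + 1) then (π j + π (j + 1)) / 2
      else π (j + 1)

/-- `Φ^B` of a bipartition. -/
def PhiB (ρ σ : ℕ → ℕ) : ℕ → ℤ := phiB (interB ρ σ)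

/-- Membership in `P^B_{2n+1}` for an integer sequence: nonnegative, weakly
decreasing, summing to `2n+1`, with every (positive) even part of even
multiplicity. -/
def IsPB (n : ℕ) (l : ℕ → ℤ) : Prop :=
  (∀ i, 0 ≤ l i) ∧ (∀ i, l (i + 1) ≤ l i) ∧
  (∃ N, (∀ i, N ≤ i → l i = 0) ∧ zsum l N = 2 * n + 1) ∧
  ∀ a : ℤ, 0 < a → Even a → Even ({i | l i = a}.ncard)

/-- Membership in `P^B_{2n+1}` for a natural-number partition. -/
def IsPBN (n : ℕ) (l : ℕ → ℕ) : Prop :=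
  IsPartition l ∧ IsComposition (2 * n + 1) l ∧
    ∀ a : ℕ, 0 < a → Even a → Even ({i | l i = a}.ncard)

/-- The map `Φ̂^B`, pointwise (0-indexed, so the paper's index `i` is `j+1`):
an odd part `λ_i` becomes `(λ_i + (−1)^i)/2`; a maximal run of an even part
`2k` starting at (0-indexed) position `s` becomes `k, k, …` if `s` is odd
(paper's `i` even) and `k−1, k+1, k−1, k+1, …` if `s` is even (paper's `i`
odd). -/
noncomputable def hphiB (l : ℕ → ℕ) (j : ℕ) : ℕ :=
  if Odd (l j) then (if Even j then (l j - 1) / 2 else (l j + 1) / 2)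
  else
    if Odd (runStart l j) then l j / 2
    else if Even (j - runStart l j) then l j / 2 - 1 else l j / 2 + 1

/-- First component of the special closure `(ρ;σ)°`. -/
def scRho (ρ σ : ℕ → ℕ) : ℕ → ℕ
  | 0 => if ρ 0 + 1 < σ 0 then (ρ 0 + σ 0) / 2 else ρ 0
  | (i + 1) =>
      if ρ (i + 1) + 1 < σ (i + 1) then (ρ (i + 1) + σ (i + 1)) / 2
      else if σ i < ρ (i + 1) then (σ i + ρ (i + 1)) / 2
      else ρ (i + 1)

/-- Second component of the special closure `(ρ;σ)°`. -/
def scSigma (ρ σ : ℕ → ℕ) (i : ℕ) : ℕ :=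
  if ρ i + 1 < σ i then (ρ i + σ i + 1) / 2
  else if σ i < ρ (i + 1) then (σ i + ρ (i + 1) + 1) / 2
  else σ i

/-- First component of the closure `(ρ;σ)~` into `Q_n^{B,2}`. -/
def tRho (ρ σ : ℕ → ℕ) (i : ℕ) : ℕ :=
  if ρ i + 2 < σ i then (ρ i + σ i + 1) / 2 - 1 else ρ i

/-- Second component of the closure `(ρ;σ)~` into `Q_n^{B,2}`. -/
def tSigma (ρ σ : ℕ → ℕ) (i : ℕ) : ℕ :=
  if ρ i + 2 < σ i then (ρ i + σ i) / 2 + 1 else σ i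

/-- First component of the closure `(ρ;σ)^B` into `Q_n^B`. -/
def bRho (ρ σ : ℕ → ℕ) : ℕ → ℕ
  | 0 => if ρ 0 + 2 < σ 0 then (ρ 0 + σ 0 + 1) / 2 - 1 else ρ 0
  | (i + 1) =>
      if ρ (i + 1) + 2 < σ (i + 1) then (ρ (i + 1) + σ (i + 1) + 1) / 2 - 1
      else if σ i < ρ (i + 1) then (σ i + ρ (i + 1)) / 2
      else ρ (i + 1)

/-- Second component of the closure `(ρ;σ)^B` into `Q_n^B`. -/
def bSigma (ρ σ : ℕ → ℕ) (i : ℕ) : ℕ :=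
  if ρ i + 2 < σ i then (ρ i + σ i) / 2 + 1
  else if σ i < ρ (i + 1) then (σ i + ρ (i + 1) + 1) / 2
  else σ i

/-- First component of the closure `(ρ;σ)^C` into `Q_n^C`. -/
def cRho (ρ σ : ℕ → ℕ) : ℕ → ℕ
  | 0 => if ρ 0 + 1 < σ 0 then (ρ 0 + σ 0) / 2 else ρ 0
  | (i + 1) =>
      if ρ (i + 1) + 1 < σ (i + 1) then (ρ (i + 1) + σ (i + 1)) / 2
      else if σ i + 1 < ρ (i + 1) then (σ i + ρ (i + 1) + 1) / 2
      else ρ (i + 1)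

/-- Second component of the closure `(ρ;σ)^C` into `Q_n^C`. -/
def cSigma (ρ σ : ℕ → ℕ) (i : ℕ) : ℕ :=
  if ρ i + 1 < σ i then (ρ i + σ i + 1) / 2
  else if σ i + 1 < ρ (i + 1) then (σ i + ρ (i + 1)) / 2
  else σ i

/-!
Write `x = (ρ₁, σ₁, ρ₂, σ₂, …)`, so that `Φ^B` starts from `a = 2x ± 1`. Since `a_{j+2} ≤ a_j`,
the ascents `a_j < a_{j+1}` are pairwise disjoint. `Φ^B` replaces each of them by two copies of
`x_j + x_{j+1}` and `Φ̂^B` splits this value again; for an even value, the parity of the start of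
its run is the parity of `j`, which decides between the splittings `(k-1, k+1)` and `(k, k)`.
Hence `Φ̂^B Φ^B(ρ;σ)` agrees with `x` off the ascents, and on each ascent it keeps the pair sum and
does not decrease the first entry. Such forward transfers inside disjoint adjacent pairs go up in
dominance order, and the transfer at `j` is trivial exactly when `x_{j+1} ≤ x_j + 2` (`j` even) or
`x_{j+1} ≤ x_j` (`j` odd), which are the inequalities defining `Q_n^B`.
-/

theorem psum_succ (f : ℕ → ℕ) (k : ℕ) : psum f (k + 1) = psum f k + f k :=
  Finset.sum_range_succ f k

/-- `y` arises from `x` by moving weight forward inside the disjoint adjacent pairs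
`(j, j + 1)` with `P j`. -/
structure IsPairTransfer (P : ℕ → Prop) (x y : ℕ → ℕ) : Prop where
  disjoint : ∀ j, P j → ¬ P (j + 1)
  le : ∀ j, P j → x j ≤ y j
  add_eq : ∀ j, P j → x j + x (j + 1) = y j + y (j + 1)
  eq_of_not : ∀ j, ¬ P j → (∀ i, j = i + 1 → ¬ P i) → x j = y j

namespace IsPairTransfer

variable {P : ℕ → Prop} {x y : ℕ → ℕ}

theorem dominates (ht : IsPairTransfer P x y) : Dominates y x := by
  classical
  have key : ∀ k, psum y (k + 1) = psum x (k + 1) + if P k then y k - x k else 0 := by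
    intro k
    induction k with
    | zero =>
      rw [psum_succ, psum_succ]
      simp only [psum, Finset.sum_range_zero, zero_add]
      split_ifs with h0
      · have := ht.le 0 h0; omega
      · simp [ht.eq_of_not 0 h0 (fun i hi => absurd hi (by omega))]
    | succ k ih =>
      rw [psum_succ y, psum_succ x, ih]
      by_cases hk : P k
      · have := ht.le k hk
        have := ht.add_eq k hk
        simp only [if_pos hk, if_neg (ht.disjoint k hk)]
        omega
      · by_cases hk1 : P (k + 1)
        · have := ht.le (k + 1) hk1
          simp only [if_pos hk1, if_neg hk]
          omega
        · have := ht.eq_of_not (k + 1) hk1 (fun i hi => by rwa [Nat.succ_inj.mp hi] at hk)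
          simp only [if_neg hk1, if_neg hk]
          omega
  rintro (_ | k)
  · exact le_rfl
  · rw [key]
    exact Nat.le_add_right _ _

theorem forall_eq_iff (ht : IsPairTransfer P x y) :
    (∀ i, x i = y i) ↔ ∀ j, P j → x j = y j := by
  refine ⟨fun h j _ => h j, fun h i => ?_⟩
  by_cases hi : P i
  · exact h i hi
  by_cases hprev : ∃ j, i = j + 1 ∧ P j
  · obtain ⟨j, rfl, hj⟩ := hprev
    have := ht.add_eq j hj
    have := h j hj
    omega
  · exact ht.eq_of_not i hi fun j hj hPj => hprev ⟨j, hj, hPj⟩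

end IsPairTransfer

section phiB

variable {π : ℕ → ℤ} {j : ℕ}

theorem phiB_of_lt (h : π j < π (j + 1)) : phiB π j = (π j + π (j + 1)) / 2 := by
  cases j <;> simp [phiB, h]

theorem phiB_succ_of_lt (hπ : ∀ j, π (j + 2) ≤ π j) (h : π j < π (j + 1)) :
    phiB π (j + 1) = (π j + π (j + 1)) / 2 := by
  have : ¬ π (j + 1) < π (j + 2) := fun h' => (hπ j).not_gt (h.trans h')
  simp [phiB, this, h]

theorem phiB_of_not_lt (h : ¬ π j < π (j + 1)) (h' : ∀ i, j = i + 1 → ¬ π i < π (i + 1)) :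
    phiB π j = π j := by
  cases j with
  | zero => simp [phiB, h]
  | succ i => simp [phiB, h, h' i rfl]

theorem antitone_phiB (hπ : ∀ j, π (j + 2) ≤ π j) : Antitone (phiB π) := by
  refine antitone_nat_of_succ_le fun j => ?_
  cases j with
  | zero => have := hπ 0; simp only [phiB, zero_add] at *; split_ifs <;> omega
  | succ i =>
    have := hπ i
    have := hπ (i + 1)
    simp only [phiB, Nat.add_assoc, Nat.reduceAdd] at *
    split_ifs <;> omega

end phiB

section runStart

variable {l : ℕ → ℕ}

theorem runStart_congr {i j : ℕ} (h : l i = l j) : runStart l i = runStart l j := by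
  simp only [runStart, h]

theorem runStart_le (hl : Antitone l) (j : ℕ) : runStart l j ≤ j := by
  have hsub : {i | l j < l i} ⊆ ↑(Finset.range j) := fun i hi => by
    simp only [Set.mem_ofPred_eq] at hi
    simp only [Finset.coe_range, Set.mem_Iio]
    by_contra hij
    exact (hl (not_lt.mp hij)).not_gt hi
  simpa [runStart] using Set.ncard_le_ncard hsub (Finset.finite_toSet _)

theorem runStart_eq_self (hl : Antitone l) {j : ℕ} (h : ∀ i < j, l j < l i) :
    runStart l j = j := by
  have hset : {i | l j < l i} = ↑(Finset.range j) := by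
    ext i
    simp only [Set.mem_ofPred_eq, Finset.coe_range, Set.mem_Iio]
    refine ⟨fun hi => ?_, h i⟩
    by_contra hij
    exact (hl (not_lt.mp hij)).not_gt hi
  rw [runStart, hset, Set.ncard_coe_finset, Finset.card_range]

end runStart

section Bipartition

variable {ρ σ : ℕ → ℕ} {j : ℕ}

theorem interleave_two_mul (k : ℕ) : interleave ρ σ (2 * k) = ρ k := by
  simp [interleave]

theorem interleave_two_mul_add_one (k : ℕ) : interleave ρ σ (2 * k + 1) = σ k := by
  simp [interleave, Nat.add_mod, Nat.add_div]

theorem interB_of_even (hj : Even j) : interB ρ σ j = 2 * interleave ρ σ j + 1 := by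
  simp [interB, interleave, Nat.even_iff.mp hj]

theorem interB_of_odd (hj : Odd j) : interB ρ σ j = 2 * interleave ρ σ j - 1 := by
  simp [interB, interleave, Nat.odd_iff.mp hj]

theorem isQuasiPartition_interleave (hρ : IsPartition ρ) (hσ : IsPartition σ) :
    IsQuasiPartition (interleave ρ σ) := by
  intro i
  have h2 : (i + 2) / 2 = i / 2 + 1 := by omega
  simp only [interleave, Nat.add_mod_right, h2]
  split_ifs
  exacts [hρ _, hσ _]

theorem interB_add_two_le (hρ : IsPartition ρ) (hσ : IsPartition σ) (j : ℕ) :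
    interB ρ σ (j + 2) ≤ interB ρ σ j := by
  have := isQuasiPartition_interleave hρ hσ j
  rcases Nat.even_or_odd j with hj | hj
  · rw [interB_of_even hj, interB_of_even (hj.add even_two)]
    omega
  · rw [interB_of_odd hj, interB_of_odd (hj.add_even even_two)]
    omega

theorem interB_add_interB_succ (j : ℕ) :
    interB ρ σ j + interB ρ σ (j + 1) =
      2 * ((interleave ρ σ j : ℤ) + interleave ρ σ (j + 1)) := by
  rcases Nat.even_or_odd j with hj | hj
  · rw [interB_of_even hj, interB_of_odd hj.add_one]
    ring
  · rw [interB_of_odd hj, interB_of_even hj.add_one]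
    ring

theorem interB_lt_succ_iff :
    interB ρ σ j < interB ρ σ (j + 1) ↔
      interleave ρ σ j + (if Even j then 2 else 0) ≤ interleave ρ σ (j + 1) := by
  rcases Nat.even_or_odd j with hj | hj
  · rw [interB_of_even hj, interB_of_odd hj.add_one, if_pos hj]
    omega
  · rw [interB_of_odd hj, interB_of_even hj.add_one, if_neg (Nat.not_even_iff_odd.mpr hj)]
    omega

theorem qB_iff_interleave :
    QB ρ σ ↔ ∀ j, interleave ρ σ (j + 1) ≤ interleave ρ σ j + if Even j then 2 else 0 := by
  constructor
  · intro h j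
    rcases Nat.even_or_odd' j with ⟨k, rfl | rfl⟩
    · simpa [interleave_two_mul, interleave_two_mul_add_one] using (h k).1
    · have : 2 * k + 1 + 1 = 2 * (k + 1) := by ring
      simpa [this, interleave_two_mul, interleave_two_mul_add_one,
        Nat.not_even_iff_odd] using (h k).2
  · intro h k
    constructor
    · simpa [interleave_two_mul, interleave_two_mul_add_one] using h (2 * k)
    · have : 2 * k + 1 + 1 = 2 * (k + 1) := by ring
      simpa [this, interleave_two_mul, interleave_two_mul_add_one,
        Nat.not_even_iff_odd] using h (2 * k + 1)

end Bipartition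

def PhiBNat (ρ σ : ℕ → ℕ) (j : ℕ) : ℕ := (PhiB ρ σ j).toNat

section PhiBNat

variable {ρ σ : ℕ → ℕ} {j : ℕ}

theorem antitone_PhiBNat (hρ : IsPartition ρ) (hσ : IsPartition σ) : Antitone (PhiBNat ρ σ) :=
  fun _ _ hij => Int.toNat_le_toNat (antitone_phiB (interB_add_two_le hρ hσ) hij)

theorem PhiBNat_of_lt (h : interB ρ σ j < interB ρ σ (j + 1)) :
    PhiBNat ρ σ j = interleave ρ σ j + interleave ρ σ (j + 1) := by
  have := interB_add_interB_succ (ρ := ρ) (σ := σ) j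
  simp only [PhiBNat, PhiB, phiB_of_lt h]
  omega

theorem PhiBNat_succ_of_lt (hρ : IsPartition ρ) (hσ : IsPartition σ)
    (h : interB ρ σ j < interB ρ σ (j + 1)) :
    PhiBNat ρ σ (j + 1) = interleave ρ σ j + interleave ρ σ (j + 1) := by
  have := interB_add_interB_succ (ρ := ρ) (σ := σ) j
  simp only [PhiBNat, PhiB, phiB_succ_of_lt (interB_add_two_le hρ hσ) h]
  omega

theorem PhiBNat_of_not_lt (h : ¬ interB ρ σ j < interB ρ σ (j + 1))
    (h' : ∀ i, j = i + 1 → ¬ interB ρ σ i < interB ρ σ (i + 1)) :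
    PhiBNat ρ σ j =
      if Even j then 2 * interleave ρ σ j + 1 else 2 * interleave ρ σ j - 1 := by
  have hval : PhiB ρ σ j = interB ρ σ j := phiB_of_not_lt h h'
  rcases Nat.even_or_odd j with hj | hj
  · rw [if_pos hj, PhiBNat, hval, interB_of_even hj]
    omega
  · have := interB_of_even (ρ := ρ) (σ := σ) hj.add_one
    rw [if_neg (Nat.not_even_iff_odd.mpr hj), PhiBNat, hval, interB_of_odd hj]
    rw [interB_of_odd hj] at h
    omega

theorem odd_PhiBNat_of_not_lt (h : ¬ interB ρ σ j < interB ρ σ (j + 1))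
    (h' : ∀ i, j = i + 1 → ¬ interB ρ σ i < interB ρ σ (i + 1)) : Odd (PhiBNat ρ σ j) := by
  have := interB_lt_succ_iff.not.mp h
  rw [PhiBNat_of_not_lt h h', Nat.odd_iff]
  split_ifs at this ⊢ <;> omega

theorem hphiB_PhiBNat_of_not_lt (h : ¬ interB ρ σ j < interB ρ σ (j + 1))
    (h' : ∀ i, j = i + 1 → ¬ interB ρ σ i < interB ρ σ (i + 1)) :
    hphiB (PhiBNat ρ σ) j = interleave ρ σ j := by
  have hodd := odd_PhiBNat_of_not_lt h h'
  rw [hphiB, if_pos hodd, PhiBNat_of_not_lt h h']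
  split_ifs <;> omega

theorem runStart_PhiBNat_mod_two (hρ : IsPartition ρ) (hσ : IsPartition σ)
    (h : interB ρ σ j < interB ρ σ (j + 1)) (hev : Even (PhiBNat ρ σ j)) :
    runStart (PhiBNat ρ σ) j % 2 = j % 2 := by
  induction j using Nat.strong_induction_on with
  | _ j ih =>
  have hl := antitone_PhiBNat hρ hσ
  by_cases hstart : ∀ i < j, PhiBNat ρ σ j < PhiBNat ρ σ i
  · rw [runStart_eq_self hl hstart]
  obtain ⟨i, hij, hli⟩ : ∃ i < j, PhiBNat ρ σ i ≤ PhiBNat ρ σ j := by simpa using hstart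
  obtain ⟨j, rfl⟩ : ∃ j', j = j' + 1 := ⟨j - 1, by omega⟩
  have hprev : PhiBNat ρ σ j = PhiBNat ρ σ (j + 1) :=
    le_antisymm ((hl (by omega : i ≤ j)).trans hli) (hl j.le_succ)
  -- An even value only occurs on ascents, so the run steps back over a whole earlier ascent.
  have hj : ¬ interB ρ σ j < interB ρ σ (j + 1) := fun hj =>
    (interB_add_two_le hρ hσ j).not_gt (hj.trans h)
  obtain ⟨i, rfl, hi⟩ : ∃ i, j = i + 1 ∧ interB ρ σ i < interB ρ σ (i + 1) := by
    by_contra hnone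
    have hodd := odd_PhiBNat_of_not_lt hj fun i hi hasc => hnone ⟨i, hi, hasc⟩
    rw [hprev, ← Nat.not_even_iff_odd] at hodd
    exact hodd hev
  have hpair : PhiBNat ρ σ i = PhiBNat ρ σ (i + 1) :=
    (PhiBNat_of_lt hi).trans (PhiBNat_succ_of_lt hρ hσ hi).symm
  rw [runStart_congr (hprev.symm.trans hpair.symm)]
  have := ih i (by omega) hi (by rwa [hpair, hprev])
  omega

theorem hphiB_PhiBNat_of_lt (hρ : IsPartition ρ) (hσ : IsPartition σ)
    (h : interB ρ σ j < interB ρ σ (j + 1)) :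
    hphiB (PhiBNat ρ σ) j =
        (if Even j then (interleave ρ σ j + interleave ρ σ (j + 1) + 1) / 2 - 1
        else (interleave ρ σ j + interleave ρ σ (j + 1) + 1) / 2) ∧
      hphiB (PhiBNat ρ σ) (j + 1) =
        if Even j then (interleave ρ σ j + interleave ρ σ (j + 1)) / 2 + 1
        else (interleave ρ σ j + interleave ρ σ (j + 1)) / 2 := by
  have h0 := PhiBNat_of_lt h
  have h1 := PhiBNat_succ_of_lt hρ hσ h
  have hr : runStart (PhiBNat ρ σ) (j + 1) = runStart (PhiBNat ρ σ) j :=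
    runStart_congr (h1.trans h0.symm)
  have hle := runStart_le (antitone_PhiBNat hρ hσ) j
  by_cases hev : Even (PhiBNat ρ σ j)
  · have hpar := runStart_PhiBNat_mod_two hρ hσ h hev
    rw [h0] at hev
    simp only [hphiB, h0, h1, hr, Nat.odd_iff, Nat.even_iff] at hev hpar ⊢
    split_ifs <;> omega
  · rw [h0] at hev
    simp only [hphiB, h0, h1, Nat.odd_iff, Nat.even_iff] at hev ⊢
    split_ifs <;> omega

theorem isPairTransfer_hphiB_PhiBNat (hρ : IsPartition ρ) (hσ : IsPartition σ) :
    IsPairTransfer (fun j => interB ρ σ j < interB ρ σ (j + 1)) (interleave ρ σ)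
      (hphiB (PhiBNat ρ σ)) where
  disjoint j h h' := (interB_add_two_le hρ hσ j).not_gt (h.trans h')
  le j h := by
    have := interB_lt_succ_iff.mp h
    rw [(hphiB_PhiBNat_of_lt hρ hσ h).1]
    split_ifs at this ⊢ <;> omega
  add_eq j h := by
    have := interB_lt_succ_iff.mp h
    rw [(hphiB_PhiBNat_of_lt hρ hσ h).1, (hphiB_PhiBNat_of_lt hρ hσ h).2]
    split_ifs at this ⊢ <;> omega
  eq_of_not _ h h' := (hphiB_PhiBNat_of_not_lt h h').symm

theorem qB_iff_forall_eq_hphiB_PhiBNat (hρ : IsPartition ρ) (hσ : IsPartition σ) :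
    QB ρ σ ↔ ∀ j, interB ρ σ j < interB ρ σ (j + 1) →
      interleave ρ σ j = hphiB (PhiBNat ρ σ) j := by
  rw [qB_iff_interleave]
  refine forall_congr' fun j => ⟨fun hq h => ?_, fun he => ?_⟩
  · have := interB_lt_succ_iff.mp h
    rw [(hphiB_PhiBNat_of_lt hρ hσ h).1]
    split_ifs at this hq ⊢ <;> omega
  · by_cases h : interB ρ σ j < interB ρ σ (j + 1)
    · have := he h
      rw [(hphiB_PhiBNat_of_lt hρ hσ h).1] at this
      split_ifs at this ⊢ <;> omega
    · have := interB_lt_succ_iff.not.mp h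
      split_ifs at this ⊢ <;> omega

end PhiBNat

/-- `(ρ;σ) ≤ Φ̂^B(Φ^B(ρ;σ))`, with equality iff `(ρ;σ)` is
B-distinguished. -/
theorem le_hphiB_phiB (n : ℕ) (ρ σ : ℕ → ℕ) (h : IsBipartition n ρ σ) :
    Dominates (hphiB (fun j => (PhiB ρ σ j).toNat)) (interleave ρ σ) ∧
      ((∀ i, interleave ρ σ i = hphiB (fun j => (PhiB ρ σ j).toNat) i) ↔
        QB ρ σ) := by
  obtain ⟨hρ, hσ, -⟩ := h
  have ht := isPairTransfer_hphiB_PhiBNat hρ hσ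
  exact ⟨ht.dominates, ht.forall_eq_iff.trans (qB_iff_forall_eq_hphiB_PhiBNat hρ hσ).symm⟩
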